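/- arXiv:1401.0868 — 2 statements merged into one kernel-verified Lean document; each statement's English description precedes it below -/
import Mathlib

section
/- For a positive integer n, there exists a finite commutative ring k with exactly n elements satisfying Σ(k) = 0 (where Σ(k) is the sum of all elements of k) if and only if n is not congruent to 2 modulo 4. -/
lemma sum_univ_add_self_eq_zero (R : Type) [AddCommGroup R] [Fintype R] :
    (∑ x : R, x) + (∑ x : R, x) = 0 := by
  have h : (∑ x : R, x) = ∑ x : R, -x :=
    Fintype.sum_equiv (Equiv.neg R) _ _ (by simp)
  have h2 : (∑ x : R, -x) = -∑ x : R, x := by rw [Finset.sum_neg_distrib]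
  rw [h2] at h
  exact eq_neg_iff_add_eq_zero.mp h

lemma sum_zmod_odd (m : ℕ) [NeZero m] (hm : m % 2 = 1) : (∑ x : ZMod m, x) = 0 := by
  set S := (∑ x : ZMod m, x) with hS
  have h2 : addOrderOf S ∣ 2 := by
    apply addOrderOf_dvd_of_nsmul_eq_zero
    rw [two_nsmul]
    exact sum_univ_add_self_eq_zero (ZMod m)
  have hmS : addOrderOf S ∣ m := by
    apply addOrderOf_dvd_of_nsmul_eq_zero
    rw [hS, Finset.smul_sum]
    have : ∀ x : ZMod m, m • x = 0 := by
      intro x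
      rw [nsmul_eq_mul, ZMod.natCast_self, zero_mul]
    simp [this]
  have hdvd : addOrderOf S ∣ Nat.gcd 2 m := Nat.dvd_gcd h2 hmS
  have hg : Nat.gcd 2 m = 1 := by
    rcases (Nat.dvd_prime Nat.prime_two).mp (Nat.gcd_dvd_left 2 m) with h | h
    · exact h
    · exfalso
      have h2m : 2 ∣ m := h ▸ Nat.gcd_dvd_right 2 m
      omega
  rw [hg, Nat.dvd_one] at hdvd
  exact AddMonoid.addOrderOf_eq_one_iff.mp hdvd

/-- For a positive integer `n`, there exists a finite commutative ring with exactly `n`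
elements whose sum of all elements is zero, if and only if `n` is not congruent to
`2` modulo `4`. -/
theorem exists_finite_commRing_sum_eq_zero_iff (n : ℕ) (hn : 0 < n) :
    (∃ (R : Type) (_ : CommRing R) (_ : Fintype R),
      Fintype.card R = n ∧ (∑ x : R, x) = 0) ↔ n % 4 ≠ 2 := by
  classical
  constructor
  · rintro ⟨R, _, _, hcard, hsum⟩ hmod
    -- Cauchy: there is an element of additive order 2
    have h2n : 2 ∣ Fintype.card R := by rw [hcard]; omega
    obtain ⟨t, ht⟩ := exists_prime_addOrderOf_dvd_card 2 h2n
    have htt : t + t = 0 := by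
      have h := addOrderOf_nsmul_eq_zero t
      rw [ht, two_nsmul] at h
      exact h
    have ht0 : t ≠ 0 := by
      intro h
      rw [h, addOrderOf_zero] at ht
      omega
    -- the 2-torsion subgroup
    set T : AddSubgroup R :=
      { carrier := {x | x + x = 0}
        add_mem' := by
          intro a b ha hb
          simp only [Set.mem_setOf_eq] at *
          calc a + b + (a + b) = (a + a) + (b + b) := by abel
          _ = 0 := by rw [ha, hb, add_zero]
        zero_mem' := by simp
        neg_mem' := by
          intro a ha
          simp only [Set.mem_setOf_eq] at *
          rw [← neg_add, ha, neg_zero] } with hT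
    have hmemT : ∀ x : R, x ∈ T ↔ x + x = 0 := fun x => Iff.rfl
    -- card of T divides n
    have hcardT : Nat.card T ∣ n := by
      rw [← hcard, ← Nat.card_eq_fintype_card]
      exact AddSubgroup.card_addSubgroup_dvd_card T
    haveI : Fintype T := Fintype.ofFinite T
    have hNat : Nat.card T = Fintype.card T := Nat.card_eq_fintype_card
    -- every prime dividing card T is 2
    have hprime : ∀ p : ℕ, p.Prime → p ∣ Fintype.card T → p = 2 := by
      intro p hp hpd
      haveI : Fact p.Prime := ⟨hp⟩
      obtain ⟨x, hx⟩ := exists_prime_addOrderOf_dvd_card (G := T) p hpd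
      have hx2 : addOrderOf x ∣ 2 := by
        apply addOrderOf_dvd_of_nsmul_eq_zero
        have hxx := x.2
        rw [hmemT] at hxx
        rw [two_nsmul]
        ext
        push_cast
        exact hxx
      rw [hx] at hx2
      exact (Nat.prime_dvd_prime_iff_eq hp Nat.prime_two).mp hx2
    -- card T ≥ 2
    have hlt : 1 < Fintype.card T := by
      rw [Fintype.one_lt_card_iff]
      exact ⟨⟨t, by rwa [hmemT]⟩, ⟨0, by simp [hmemT]⟩, by simpa using ht0⟩
    -- 4 does not divide card T
    have h4 : ¬ (4 ∣ Fintype.card T) := by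
      intro h4
      have : 4 ∣ n := dvd_trans h4 (hNat ▸ hcardT)
      omega
    -- hence card T = 2
    have hcard2 : Fintype.card T = 2 := by
      set c := Fintype.card T with hc
      obtain ⟨d, hd⟩ : 2 ∣ c := by
        obtain ⟨p, hp, hpd⟩ := Nat.exists_prime_and_dvd (n := c) (by omega)
        rwa [hprime p hp hpd] at hpd
      have hd1 : d = 1 := by
        by_contra hd1
        obtain ⟨q, hq, hqd⟩ := Nat.exists_prime_and_dvd hd1
        have hqc : q ∣ c := hd ▸ Dvd.dvd.mul_left hqd 2
        have hq2 := hprime q hq hqc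
        apply h4
        rw [hd]
        subst hq2
        exact Nat.mul_dvd_mul_left 2 hqd
      omega
    -- the sum over R equals the sum over the 2-torsion elements
    have hsplit : (∑ x : R, x) = ∑ x ∈ Finset.univ.filter (fun x : R => x + x = 0), x := by
      rw [← Finset.sum_filter_add_sum_filter_not Finset.univ (fun x : R => x + x = 0)]
      have hzero : (∑ x ∈ Finset.univ.filter (fun x : R => ¬ (x + x = 0)), x) = 0 := by
        apply Finset.sum_involution (g := fun a _ => -a)
        · intro a _; exact add_neg_cancel a
        · intro a ha _
          simp only [Finset.mem_filter, Finset.mem_univ, true_and] at ha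
          intro h
          apply ha
          have : a + a = -a + a := by rw [h]
          rw [this, neg_add_cancel]
        · intro a _; exact neg_neg a
        · intro a ha
          simp only [Finset.mem_filter, Finset.mem_univ, true_and] at *
          intro h
          apply ha
          rw [← neg_add] at h
          exact neg_eq_zero.mp h
      rw [hzero, add_zero]
    -- relate cards
    have hfc : (Finset.univ.filter (fun x : R => x + x = 0)).card = 2 := by
      rw [← hcard2, ← Fintype.card_subtype]
      exact (Fintype.card_congr (Equiv.subtypeEquivRight (fun x => (hmemT x)))).symm
    -- the 2-torsion finset is {0, t}
    have hfT : Finset.univ.filter (fun x : R => x + x = 0) = {0, t} := by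
      have hsub : ({0, t} : Finset R) ⊆ Finset.univ.filter (fun x : R => x + x = 0) := by
        intro x hx
        simp only [Finset.mem_insert, Finset.mem_singleton] at hx
        rcases hx with rfl | rfl <;> simp [htt]
      have hc2 : ({0, t} : Finset R).card = 2 := by
        rw [Finset.card_insert_of_notMem (by simpa using ht0.symm), Finset.card_singleton]
      exact (Finset.eq_of_subset_of_card_le hsub (by omega)).symm
    rw [hsplit, hfT] at hsum
    rw [Finset.sum_insert (by simpa using ht0.symm), Finset.sum_singleton, zero_add] at hsum
    exact ht0 hsum
  · intro hmod
    rcases Nat.even_or_odd n with he | ho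
    · -- n even, so 4 ∣ n
      have h4 : 4 ∣ n := by
        rcases he with ⟨k, hk⟩
        omega
      obtain ⟨m, hm⟩ : ∃ m, n = 2 * m := ⟨n / 2, by omega⟩
      have hm2 : m % 2 = 0 := by omega
      have hm0 : m ≠ 0 := by omega
      haveI : NeZero m := ⟨hm0⟩
      refine ⟨ZMod 2 × ZMod m, inferInstance, inferInstance, ?_, ?_⟩
      · rw [Fintype.card_prod, ZMod.card, ZMod.card]; omega
      · have h1 : (∑ p : ZMod 2 × ZMod m, p) =
            (∑ p : ZMod 2 × ZMod m, p.1, ∑ p : ZMod 2 × ZMod m, p.2) := by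
          ext <;> simp [Prod.fst_sum, Prod.snd_sum]
        rw [h1]
        have hfst : (∑ p : ZMod 2 × ZMod m, p.1) = 0 := by
          rw [Fintype.sum_prod_type]
          simp only [Finset.sum_const, Finset.card_univ, ZMod.card]
          rw [← Finset.smul_sum]
          have hone : (∑ x : ZMod 2, x) = 1 := by decide
          rw [hone, nsmul_eq_mul, mul_one]
          rw [ZMod.natCast_eq_zero_iff]
          omega
        have hsnd : (∑ p : ZMod 2 × ZMod m, p.2) = 0 := by
          rw [Fintype.sum_prod_type]
          simp only [Finset.sum_const, Finset.card_univ, ZMod.card]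
          rw [two_nsmul]
          exact sum_univ_add_self_eq_zero (ZMod m)
        rw [hfst, hsnd]
        rfl
    · -- n odd
      haveI : NeZero n := ⟨by omega⟩
      refine ⟨ZMod n, inferInstance, inferInstance, ?_, ?_⟩
      · exact ZMod.card n
      · exact sum_zmod_odd n (Nat.odd_iff.mp ho)
end

section
/- Let M be a simple matroid, k ≥ 3 an integer, and k a k-element set. The assignment sending a k-net N with parts (M_α)_{α∈k} to the function τ : M → k with τ(u) = α for u ∈ M_α is a bijection between the set of k-nets on M and the set Z'_k(M) \ B_k(M), where Z'_k(M) is the set of functions M → k whose restriction to every rank-2 flat is either constant or bijective, and B_k(M) is the set of constant functions. -/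
/-- A matroid is simple if every subset of its ground set of size at most two is
independent. -/
def Matroid.IsSimpleMatroid {α : Type} (M : Matroid α) : Prop :=
  ∀ S : Set α, S ⊆ M.E → S.ncard ≤ 2 → M.Indep S

/-- A line (rank-2 flat) of a matroid: a flat having a basis of size two. -/
def Matroid.IsLine {α : Type} (M : Matroid α) (F : Set α) : Prop :=
  M.IsFlat F ∧ ∃ I, M.IsBasis I F ∧ I.ncard = 2

/-!
In a simple matroid two distinct points span exactly one line, and every line is spanned by any
two of its points. Hence the net axiom for a pair `u, v` of differently coloured points says
precisely that the colouring is a bijection on the line through `u` and `v`, and a line on which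
the colouring is not constant is such a line.
-/

namespace Matroid

variable {α : Type} {M : Matroid α} {u v : α}

lemma IsSimpleMatroid.indep_pair (hs : M.IsSimpleMatroid) (hu : u ∈ M.E) (hv : v ∈ M.E) :
    M.Indep {u, v} :=
  hs _ (Set.pair_subset hu hv) ((Set.ncard_insert_le u {v}).trans (by simp))

lemma IsSimpleMatroid.isLine_closure_pair (hs : M.IsSimpleMatroid) (hu : u ∈ M.E)
    (hv : v ∈ M.E) (huv : u ≠ v) : M.IsLine (M.closure {u, v}) :=
  ⟨M.isFlat_closure _, {u, v}, (hs.indep_pair hu hv).isBasis_closure, Set.ncard_pair huv⟩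

lemma IsLine.eq_closure_pair {X : Set α} (hs : M.IsSimpleMatroid) (hX : M.IsLine X)
    (hu : u ∈ X) (hv : v ∈ X) (huv : u ≠ v) : X = M.closure {u, v} := by
  obtain ⟨hflat, I, hI, hIcard⟩ := hX
  have huvX : {u, v} ⊆ X := Set.pair_subset hu hv
  obtain ⟨J, hJ, huvJ⟩ := (hs.indep_pair (hflat.subset_ground hu) (hflat.subset_ground hv))
    |>.subset_isBasis_of_subset huvX hflat.subset_ground
  have hIencard : I.encard = 2 := by
    rw [← (Set.finite_of_ncard_ne_zero (by omega)).cast_ncard_eq, hIcard]; rfl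
  have hJeq : {u, v} = J := (Set.toFinite _).eq_of_subset_of_encard_le huvJ <| by
    rw [Set.encard_pair huv, ← hIencard, hI.encard_eq_encard hJ]
  rw [← hflat.closure, ← hJ.closure_eq_closure, hJeq]

end Matroid

section Coloring

variable {α K : Type} {c : α → K} {X : Set α}

lemma Set.bijOn_univ_iff_existsUnique :
    Set.BijOn c X Set.univ ↔ ∀ γ, ∃! w, w ∈ X ∧ c w = γ := by
  refine ⟨fun h γ => ?_,
    fun h => ⟨Set.mapsTo_univ _ _, fun x hx y hy hxy => ?_, fun γ _ => ?_⟩⟩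
  · obtain ⟨w, hw, rfl⟩ := h.surjOn (Set.mem_univ γ)
    exact ⟨w, ⟨hw, rfl⟩, fun y hy => h.injOn hy.1 hw hy.2⟩
  · exact (h (c x)).unique ⟨hx, rfl⟩ ⟨hy, hxy.symm⟩
  · exact (h γ).exists

lemma exists_ne_of_not_exists_const [Nonempty K] (hc : ¬ ∃ γ : K, ∀ u, c u = γ) :
    ∃ u v, c u ≠ c v := by
  push Not at hc
  obtain ⟨u, hu⟩ := hc (Classical.arbitrary K)
  obtain ⟨v, hv⟩ := hc (c u)
  exact ⟨u, v, hv.symm⟩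

end Coloring

theorem knets_eq_special_cocycles_general (α K : Type) [Fintype K]
    (M : Matroid α) (hE : M.E = Set.univ) (hs : M.IsSimpleMatroid)
    (k : ℕ) (hk : 3 ≤ k) (hK : Fintype.card K = k) :
    {c : α → K | (∀ γ : K, ∃ u, c u = γ) ∧
        ∀ u v : α, c u ≠ c v → ∀ γ : K,
          ∃! w, w ∈ M.closure {u, v} ∧ c w = γ} =
    {τ : α → K | (∀ X : Set α, M.IsLine X →
        ((∀ u ∈ X, ∀ v ∈ X, τ u = τ v) ∨ Set.BijOn τ X Set.univ)) ∧
      ¬ ∃ γ : K, ∀ u, τ u = γ} := by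
  have hground (u : α) : u ∈ M.E := hE ▸ Set.mem_univ u
  have hpair (u v : α) : {u, v} ⊆ M.closure {u, v} := M.subset_closure _ (fun x _ => hground x)
  ext c
  refine ⟨fun ⟨hsurj, hnet⟩ => ⟨fun X hX => ?_, ?_⟩, fun ⟨hlines, hnc⟩ => ?_⟩
  · refine or_iff_not_imp_left.2 fun hconst => ?_
    push Not at hconst
    obtain ⟨u, hu, v, hv, huv⟩ := hconst
    rw [hX.eq_closure_pair hs hu hv (ne_of_apply_ne c huv)]
    exact Set.bijOn_univ_iff_existsUnique.2 (hnet u v huv)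
  · rintro ⟨γ, hγ⟩
    obtain ⟨γ', hγ'⟩ := Fintype.exists_ne_of_one_lt_card (by omega) γ
    obtain ⟨u, rfl⟩ := hsurj γ'
    exact hγ' (hγ u)
  have hKne : Nonempty K := Fintype.card_pos_iff.mp (by omega)
  have hbij {u v : α} (huv : c u ≠ c v) : Set.BijOn c (M.closure {u, v}) Set.univ :=
    have hline := hs.isLine_closure_pair (hground u) (hground v) (ne_of_apply_ne c huv)
    (hlines _ hline).resolve_left fun h => huv (h u (hpair u v (by simp)) v (hpair u v (by simp)))
  obtain ⟨u₀, v₀, h₀⟩ := exists_ne_of_not_exists_const hnc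
  refine ⟨fun γ => ?_, fun u v huv => Set.bijOn_univ_iff_existsUnique.1 (hbij huv)⟩
  obtain ⟨w, -, hw⟩ := (hbij h₀).surjOn (Set.mem_univ γ)
  exact ⟨w, hw⟩

/-- Let `M` be a simple matroid and `K` a set with `k ≥ 3` elements.  Identifying a
`K`-labeled `k`-net on `M` (a partition into nonempty blocks such that for points
`u, v` in distinct blocks the closure of `{u, v}` meets every block in exactly one
element) with its coloring function `τ : α → K`, the set of `k`-nets on `M` is
exactly `Z'_K(M) \ B_K(M)`: the set of non-constant functions `τ` whose restriction
to every rank-2 flat of `M` is either constant or bijective onto `K`. -/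
theorem knets_eq_special_cocycles (α K : Type) [Fintype α] [Fintype K]
    (M : Matroid α) (hE : M.E = Set.univ) (hs : M.IsSimpleMatroid)
    (k : ℕ) (hk : 3 ≤ k) (hK : Fintype.card K = k) :
    {c : α → K | (∀ γ : K, ∃ u, c u = γ) ∧
        ∀ u v : α, c u ≠ c v → ∀ γ : K,
          ∃! w, w ∈ M.closure {u, v} ∧ c w = γ} =
    {τ : α → K | (∀ X : Set α, M.IsLine X →
        ((∀ u ∈ X, ∀ v ∈ X, τ u = τ v) ∨ Set.BijOn τ X Set.univ)) ∧
      ¬ ∃ γ : K, ∀ u, τ u = γ} :=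
  knets_eq_special_cocycles_general α K M hE hs k hk hK
end
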